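/- arXiv:2510.06722 — 3 statements merged into one kernel-verified Lean document; each statement's English description precedes it below -/
import Mathlib

section
/- The two expressions for the eigenvalue polynomial agree: ∑_{j=0}^{k} (-1)^{k-j}·binom(r-j, k-j)·binom(r-i, j)·binom(n-r+j-i, j) = ∑_{j=0}^{k} (-1)^{j}·binom(i,j)·binom(r-i, k-j)·binom(n-r-i, k-j), for all natural numbers n, r, i, k with r ≤ n/2, i ≤ r and k ≤ r. -/
/-!
Write `C(n - r + j - i, j) = C(b + j, j) = ∑ₜ C(b, t) C(j, t)` with `a = r - i`, `b = n - r - i`, and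
swap the sums. Since `C(a, j) C(j, t) = C(a, t) C(a - t, j - t)`, the inner sum over `j` becomes a
Chu–Vandermonde convolution once each signed coefficient `(-1)ˡ C(N, l)` is read as the generalised
binomial coefficient `choose (l - N - 1) l`; it collapses to `(-1)^(k-t) C(i, k - t) C(a, t)`, and
reflecting `t ↦ k - t` gives the right-hand side.
-/

open Finset

theorem neg_one_pow_mul_choose_eq_ringChoose (N l : ℕ) :
    (-1 : ℤ) ^ l * N.choose l = Ring.choose ((l : ℤ) - N - 1) l := by
  rw [show (l : ℤ) - N - 1 = -((N + 1 - l : ℤ)) by ring, Ring.choose_neg,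
    show (N + 1 - l : ℤ) + l - 1 = N by ring, Ring.choose_natCast, Units.smul_def,
    Int.coe_negOnePow_natCast, smul_eq_mul]

theorem sum_range_choose_mul_neg_one_pow_mul_choose (A i K : ℕ) :
    ∑ m ∈ range (K + 1), (A.choose m : ℤ) * ((-1) ^ (K - m) * (A + i - m).choose (K - m)) =
      (-1) ^ K * i.choose K := by
  have term : ∀ m ∈ range (K + 1),
      (A.choose m : ℤ) * ((-1) ^ (K - m) * (A + i - m).choose (K - m)) =
        Ring.choose (A : ℤ) m * Ring.choose ((K : ℤ) - A - i - 1) (K - m) := by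
    intro m hm
    have hmK : m ≤ K := Nat.lt_succ_iff.mp (mem_range.mp hm)
    -- the upper index `(K - m) - (A + i - m) - 1` does not depend on `m`
    rcases le_or_gt m A with hmA | hAm
    · rw [Ring.choose_natCast, neg_one_pow_mul_choose_eq_ringChoose]
      congr 2
      push_cast [hmK, show m ≤ A + i by omega]
      ring
    · simp [Nat.choose_eq_zero_of_lt hAm, Ring.choose_natCast]
  rw [sum_congr rfl term, ← Nat.sum_antidiagonal_eq_sum_range_succ
      (fun m l => Ring.choose (A : ℤ) m * Ring.choose ((K : ℤ) - A - i - 1) l),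
    ← Ring.add_choose_eq _ (Commute.all _ _), neg_one_pow_mul_choose_eq_ringChoose]
  congr 1
  ring

theorem sum_Ico_neg_one_pow_mul_choose_mul_choose_mul_choose (a i t k : ℕ) (htk : t ≤ k) :
    ∑ j ∈ Ico t (k + 1),
        (-1 : ℤ) ^ (k - j) * (a + i - j).choose (k - j) * a.choose j * j.choose t =
      (-1) ^ (k - t) * i.choose (k - t) * a.choose t := by
  obtain ⟨K, rfl⟩ := Nat.exists_eq_add_of_le htk
  rcases le_or_gt t a with hta | hat
  · rw [sum_Ico_eq_sum_range, show t + K + 1 - t = K + 1 by omega, Nat.add_sub_cancel_left,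
      ← sum_range_choose_mul_neg_one_pow_mul_choose (a - t) i K, sum_mul]
    refine sum_congr rfl fun m hm => ?_
    have hmK : m ≤ K := Nat.lt_succ_iff.mp (mem_range.mp hm)
    have revision : (a.choose (t + m) * (t + m).choose t : ℤ) = a.choose t * (a - t).choose m := by
      rw [← Nat.cast_mul, Nat.choose_mul (Nat.le_add_right t m), Nat.add_sub_cancel_left,
        Nat.cast_mul]
    rw [Nat.add_sub_add_left, show a + i - (t + m) = a - t + i - m by omega]
    linear_combination ((-1 : ℤ) ^ (K - m) * ((a - t + i - m).choose (K - m) : ℤ)) * revision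
  · rw [Nat.choose_eq_zero_of_lt hat, Nat.cast_zero, mul_zero]
    refine sum_eq_zero fun j hj => ?_
    rw [Nat.choose_eq_zero_of_lt (hat.trans_le (mem_Ico.mp hj).1), Nat.cast_zero, mul_zero,
      zero_mul]

theorem choose_add_right_eq_sum_choose_mul_choose (b j : ℕ) :
    (b + j).choose j = ∑ t ∈ range (j + 1), b.choose t * j.choose t := by
  rw [Nat.add_choose_eq, Nat.sum_antidiagonal_eq_sum_range_succ_mk]
  exact sum_congr rfl fun t ht => by rw [Nat.choose_symm (Nat.lt_succ_iff.mp (mem_range.mp ht))]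

theorem sum_range_neg_one_pow_mul_choose_mul_choose_mul_choose_add (a b i k : ℕ) :
    ∑ j ∈ range (k + 1),
        (-1 : ℤ) ^ (k - j) * (a + i - j).choose (k - j) * a.choose j * (b + j).choose j =
      ∑ j ∈ range (k + 1),
        (-1 : ℤ) ^ j * i.choose j * a.choose (k - j) * b.choose (k - j) := by
  calc _ = ∑ j ∈ range (k + 1), ∑ t ∈ range (j + 1), (b.choose t : ℤ) *
          ((-1) ^ (k - j) * (a + i - j).choose (k - j) * a.choose j * j.choose t) := by
        refine sum_congr rfl fun j _ => ?_
        rw [choose_add_right_eq_sum_choose_mul_choose, Nat.cast_sum, mul_sum]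
        refine sum_congr rfl fun t _ => ?_
        push_cast
        ring
    _ = ∑ t ∈ range (k + 1),
          (b.choose t : ℤ) * ((-1) ^ (k - t) * i.choose (k - t) * a.choose t) := by
        simp only [range_eq_Ico, ← sum_Ico_Ico_comm, ← mul_sum]
        refine sum_congr rfl fun t ht => ?_
        rw [sum_Ico_neg_one_pow_mul_choose_mul_choose_mul_choose a i t k
          (Nat.lt_succ_iff.mp (mem_Ico.mp ht).2)]
    _ = _ := by
        rw [← sum_range_reflect]
        refine sum_congr rfl fun j hj => ?_
        have hjk : j ≤ k := Nat.lt_succ_iff.mp (mem_range.mp hj)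
        rw [Nat.add_sub_cancel, Nat.sub_sub_self hjk]
        ring

theorem stmt1_general (n r i k : ℕ) (hr : r ≤ n / 2) (hir : i ≤ r) :
    ∑ j ∈ Finset.range (k + 1),
        (-1 : ℤ) ^ (k - j) * (Nat.choose (r - j) (k - j)) * (Nat.choose (r - i) j) *
          (Nat.choose (n - r + j - i) j) =
      ∑ j ∈ Finset.range (k + 1),
        (-1 : ℤ) ^ j * (Nat.choose i j) * (Nat.choose (r - i) (k - j)) *
          (Nat.choose (n - r - i) (k - j)) := by
  rw [← sum_range_neg_one_pow_mul_choose_mul_choose_mul_choose_add]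
  refine sum_congr rfl fun j _ => ?_
  rw [show r - i + i - j = r - j by omega, show n - r - i + j = n - r + j - i by omega]

theorem stmt1 (n r i k : ℕ) (hr : r ≤ n / 2) (hir : i ≤ r) (hkr : k ≤ r) :
    ∑ j ∈ Finset.range (k + 1),
        (-1 : ℤ) ^ (k - j) * (Nat.choose (r - j) (k - j)) * (Nat.choose (r - i) j) *
          (Nat.choose (n - r + j - i) j) =
      ∑ j ∈ Finset.range (k + 1),
        (-1 : ℤ) ^ j * (Nat.choose i j) * (Nat.choose (r - i) (k - j)) *
          (Nat.choose (n - r - i) (k - j)) :=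
  stmt1_general n r i k hr hir
end

section
/- In the Johnson graph G(n,r,s), the first-level eigenvalue satisfies E_{r-s}(1) = ((sn - r²)/(r(n-r)))·binom(r,s)·binom(n-r,r-s), i.e. r(n-r)·E_{r-s}(1) = (sn - r²)·binom(r,s)·binom(n-r,r-s), where E_k(i) = ∑_{j=0}^{k} (-1)^j·binom(i,j)·binom(r-i,k-j)·binom(n-r-i,k-j). -/
/-!
Only the terms `j = 0, 1` of `E_k(1)` survive, so with `a = r`, `b = n - r` and `k = r - s`,
`E_k(1) = C(a-1,k) C(b-1,k) - C(a-1,k-1) C(b-1,k-1)`. The absorption identities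
`a C(a-1,k-1) = k C(a,k)` and `a C(a-1,k) = (a-k) C(a,k)` turn `a b E_k(1)` into
`((a-k)(b-k) - k²) C(a,k) C(b,k) = (a b - k n) C(a,k) C(b,k)`, and `a b - k n = s n - r²`.
-/

/-- The eigenvalue sum E_k(i) for the Johnson graph G(n,r,s). -/
def johnsonE (n r k i : ℕ) : ℤ :=
  ∑ j ∈ Finset.range (k + 1),
    (-1 : ℤ) ^ j * (Nat.choose i j) * (Nat.choose (r - i) (k - j)) *
      (Nat.choose (n - r - i) (k - j))

theorem johnsonE_one_succ (n r k : ℕ) :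
    johnsonE n r (k + 1) 1 =
      ((r - 1).choose (k + 1) * (n - r - 1).choose (k + 1) -
        (r - 1).choose k * (n - r - 1).choose k : ℤ) := by
  have high_terms_vanish : ∀ j, (Nat.choose 1 (j + 2) : ℤ) = 0 := fun j => by
    rw [Nat.choose_eq_zero_of_lt (by omega), Nat.cast_zero]
  simp only [johnsonE, Finset.sum_range_succ', high_terms_vanish, mul_zero, zero_mul,
    Finset.sum_const_zero, zero_add, pow_one, pow_zero, Nat.choose_self,
    Nat.choose_succ_self_right, Nat.cast_one, mul_one, one_mul, neg_mul, Nat.reduceSubDiff,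
    tsub_zero]
  ring

theorem Nat.cast_mul_choose_sub_one (a k : ℕ) :
    (a : ℤ) * (a - 1).choose k = (k + 1) * a.choose (k + 1) := by
  rcases a with _ | m
  · simp
  · exact_mod_cast (m.add_one_mul_choose_eq k).trans (mul_comm _ _)

theorem Nat.cast_mul_choose_sub_one_succ (a k : ℕ) :
    (a : ℤ) * (a - 1).choose (k + 1) = (a - (k + 1)) * a.choose (k + 1) := by
  rcases a with _ | m
  · simp
  · have pascal : ((m + 1).choose (k + 1) : ℤ) = m.choose k + m.choose (k + 1) := by
      exact_mod_cast m.choose_succ_succ k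
    have absorption := Nat.cast_mul_choose_sub_one (m + 1) k
    push_cast at absorption ⊢
    linear_combination -(m + 1 : ℤ) * pascal - absorption

theorem cast_mul_mul_choose_sub_one_sub_eq (a b k : ℕ) :
    (a : ℤ) * b * ((a - 1).choose (k + 1) * (b - 1).choose (k + 1) -
        (a - 1).choose k * (b - 1).choose k) =
      (a * b - (k + 1) * (a + b)) * a.choose (k + 1) * b.choose (k + 1) := by
  linear_combination
    (b : ℤ) * (b - 1).choose (k + 1) * Nat.cast_mul_choose_sub_one_succ a k
    + ((a : ℤ) - (k + 1)) * a.choose (k + 1) * Nat.cast_mul_choose_sub_one_succ b k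
    - (b : ℤ) * (b - 1).choose k * Nat.cast_mul_choose_sub_one a k
    - ((k : ℤ) + 1) * a.choose (k + 1) * Nat.cast_mul_choose_sub_one b k

theorem stmt14_general (n r s : ℕ) (hsr : s < r) (hrn : 2 * r ≤ n) :
    (r : ℤ) * ((n : ℤ) - r) * johnsonE n r (r - s) 1 =
      ((s : ℤ) * n - (r : ℤ) ^ 2) * (Nat.choose r s) * (Nat.choose (n - r) (r - s)) := by
  obtain ⟨k, hk⟩ : ∃ k, r - s = k + 1 := ⟨r - s - 1, by omega⟩
  have hs : s = r - (k + 1) := by omega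
  have hr : r ≤ n := by omega
  rw [hk, johnsonE_one_succ, hs, Nat.choose_symm (by omega), ← Nat.cast_sub hr,
    cast_mul_mul_choose_sub_one_sub_eq]
  push_cast [hr, show k + 1 ≤ r by omega]
  ring

theorem stmt14 (n r s : ℕ) (hs1 : 1 ≤ s) (hsr : s < r) (hrn : 2 * r ≤ n) :
    (r : ℤ) * ((n : ℤ) - r) * johnsonE n r (r - s) 1 =
      ((s : ℤ) * n - (r : ℤ) ^ 2) * (Nat.choose r s) * (Nat.choose (n - r) (r - s)) :=
  stmt14_general n r s hsr hrn
end

section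
/- Let C(i,j) = binom(i,j)·binom(r-i, r-s-j)·binom(n-r-i, r-s-j) and E_{r-s}(i) = ∑_{j=0}^{i} (-1)^j C(i,j). Then for 1 ≤ i ≤ r-s, the telescoping identity (r-i+1)(n-r-i+1)·E_{r-s}(i) = ∑_{j=0}^{i-1} (-1)^j·[(s-i+j+1)(n-2r+s+j-i+1) - (r-s-j)²]·C(i-1,j) holds. -/
/-- C(i,j) = binom(i,j)·binom(r-i, r-s-j)·binom(n-r-i, r-s-j), as an integer. -/
def johnsonC (n r s i j : ℕ) : ℤ :=
  (Nat.choose i j : ℤ) * (Nat.choose (r - i) (r - s - j)) * (Nat.choose (n - r - i) (r - s - j))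

/-!
Absorbing the prefactor `(r-i+1)(n-r-i+1)` into the two lower binomials turns the `j`-th summand
into `binom(i,j) · G(r-s-j)` with `G t = (r-i+1-t)(n-r-i+1-t) binom(r-i+1,t) binom(n-r-i+1,t)`.
Pascal's rule for `binom(i,j)` pairs consecutive terms of the alternating sum into differences
`G t - G (t-1)`, and `G (t-1) = t² binom(r-i+1,t) binom(n-r-i+1,t)` produces the square `(r-s-j)²`.
-/

open Finset

section Binomial

variable {R : Type*} [CommRing R]

theorem succ_mul_choose_eq_sub_mul_choose_succ (a t : ℕ) :
    ((a : R) + 1) * a.choose t = ((a : R) + 1 - t) * (a + 1).choose t := by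
  rcases le_or_gt t (a + 1) with h | h
  · have := congrArg (Nat.cast : ℕ → R) (Nat.choose_mul_succ_eq a t)
    push_cast [Nat.cast_sub h] at this
    linear_combination this
  · simp [Nat.choose_eq_zero_of_lt h, Nat.choose_eq_zero_of_lt (by omega : a < t)]

theorem sub_mul_choose_eq_succ_mul_choose_succ (a t : ℕ) :
    ((a : R) - t) * a.choose t = ((t : R) + 1) * a.choose (t + 1) := by
  rcases le_or_gt t a with h | h
  · have := congrArg (Nat.cast : ℕ → R) (Nat.choose_succ_right_eq a t)
    push_cast [Nat.cast_sub h] at this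
    linear_combination -this
  · simp [Nat.choose_eq_zero_of_lt h, Nat.choose_eq_zero_of_lt (by omega : a < t + 1)]

theorem sum_range_alternating_choose_succ_mul (m : ℕ) (F : ℕ → R) :
    ∑ j ∈ range (m + 2), (-1) ^ j * ((m + 1).choose j : R) * F j =
      ∑ j ∈ range (m + 1), (-1) ^ j * (m.choose j : R) * (F j - F (j + 1)) := by
  have hshift : ∑ j ∈ range (m + 1), (-1) ^ j * (m.choose j : R) * F j =
      ∑ j ∈ range (m + 1), (-1) ^ (j + 1) * (m.choose (j + 1) : R) * F (j + 1) + F 0 := by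
    have h := sum_range_succ' (fun j => (-1) ^ j * (m.choose j : R) * F j) (m + 1)
    rw [sum_range_succ, Nat.choose_succ_self] at h
    simpa using h
  simp only [sum_range_succ' _ (m + 1), mul_sub, sum_sub_distrib, hshift, Nat.choose_succ_succ',
    Nat.cast_add, mul_add, add_mul, pow_succ, sum_add_distrib]
  simp only [mul_neg_one, neg_mul, sum_neg_distrib, pow_zero, Nat.choose_zero_right, Nat.cast_one,
    one_mul]
  ring

theorem succ_mul_succ_mul_alternating_sum_choose_mul_choose (a b k m : ℕ) (hmk : m + 1 ≤ k) :
    ((a : R) + 1) * ((b : R) + 1) * ∑ j ∈ range (m + 2),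
        (-1) ^ j * ((m + 1).choose j * a.choose (k - j) * b.choose (k - j) : R) =
      ∑ j ∈ range (m + 1), (-1) ^ j *
        (((a : R) + 1 - (k - j : ℕ)) * ((b : R) + 1 - (k - j : ℕ)) - ((k - j : ℕ) : R) ^ 2) *
          (m.choose j * (a + 1).choose (k - j) * (b + 1).choose (k - j) : R) := by
  set P : ℕ → R := fun t => (a + 1).choose t * (b + 1).choose t
  set G : ℕ → R := fun t => ((a : R) + 1 - t) * ((b : R) + 1 - t) * P t
  have habsorb (t : ℕ) : ((a : R) + 1) * ((b : R) + 1) * (a.choose t * b.choose t) = G t := by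
    linear_combination ((b : R) + 1) * b.choose t * succ_mul_choose_eq_sub_mul_choose_succ (R := R) a t +
      ((a : R) + 1 - t) * (a + 1).choose t * succ_mul_choose_eq_sub_mul_choose_succ (R := R) b t
  have hdescend (t : ℕ) : G t = ((t : R) + 1) ^ 2 * P (t + 1) := by
    have ha := sub_mul_choose_eq_succ_mul_choose_succ (R := R) (a + 1) t
    have hb := sub_mul_choose_eq_succ_mul_choose_succ (R := R) (b + 1) t
    push_cast at ha hb
    linear_combination ((b : R) + 1 - t) * (b + 1).choose t * ha +
      ((t : R) + 1) * (a + 1).choose (t + 1) * hb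
  calc _ = ∑ j ∈ range (m + 2), (-1) ^ j * ((m + 1).choose j : R) * G (k - j) := by
        rw [mul_sum]
        refine sum_congr rfl fun j _ => ?_
        rw [← habsorb]
        ring
    _ = ∑ j ∈ range (m + 1), (-1) ^ j * (m.choose j : R) * (G (k - j) - G (k - (j + 1))) :=
        sum_range_alternating_choose_succ_mul m _
    _ = _ := sum_congr rfl fun j hj => ?_
  obtain ⟨t, ht, ht'⟩ : ∃ t, k - j = t + 1 ∧ k - (j + 1) = t :=
    ⟨k - (j + 1), by simp only [mem_range] at hj; omega, rfl⟩
  rw [ht, ht', hdescend t]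
  simp only [G, P]
  push_cast
  ring

end Binomial

theorem stmt16_general (n r s i : ℕ) (hrn : 2 * r ≤ n) (hi1 : 1 ≤ i)
    (hirs : i ≤ r - s) :
    ((r : ℤ) - i + 1) * ((n : ℤ) - r - i + 1) *
        (∑ j ∈ Finset.range (i + 1), (-1 : ℤ) ^ j * johnsonC n r s i j) =
      ∑ j ∈ Finset.range i, (-1 : ℤ) ^ j *
        (((s : ℤ) - i + j + 1) * ((n : ℤ) - 2 * r + s + j - i + 1) -
          ((r : ℤ) - s - j) ^ 2) * johnsonC n r s (i - 1) j := by
  obtain ⟨m, rfl⟩ : ∃ m, i = m + 1 := ⟨i - 1, by omega⟩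
  have hpre : ((r : ℤ) - (m + 1 : ℕ) + 1) * ((n : ℤ) - r - (m + 1 : ℕ) + 1) =
      (((r - (m + 1) : ℕ) : ℤ) + 1) * (((n - r - (m + 1) : ℕ) : ℤ) + 1) := by
    push_cast [Nat.cast_sub (by omega : m + 1 ≤ r), Nat.cast_sub (by omega : m + 1 ≤ n - r),
      Nat.cast_sub (by omega : r ≤ n)]
    ring
  rw [hpre]
  convert succ_mul_succ_mul_alternating_sum_choose_mul_choose (r - (m + 1)) (n - r - (m + 1))
    (r - s) m hirs using 1
  · rfl
  refine sum_congr rfl fun j hj => ?_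
  simp only [mem_range] at hj
  have ha : r - m = r - (m + 1) + 1 := by omega
  have hb : n - r - m = n - r - (m + 1) + 1 := by omega
  simp only [johnsonC, Nat.add_sub_cancel, ha, hb]
  push_cast [Nat.cast_sub (by omega : j ≤ r - s), Nat.cast_sub (by omega : s ≤ r),
    Nat.cast_sub (by omega : m + 1 ≤ r), Nat.cast_sub (by omega : m + 1 ≤ n - r),
    Nat.cast_sub (by omega : r ≤ n)]
  ring

theorem stmt16 (n r s i : ℕ) (hsr : s < r) (hrn : 2 * r ≤ n) (hi1 : 1 ≤ i)
    (hirs : i ≤ r - s) :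
    ((r : ℤ) - i + 1) * ((n : ℤ) - r - i + 1) *
        (∑ j ∈ Finset.range (i + 1), (-1 : ℤ) ^ j * johnsonC n r s i j) =
      ∑ j ∈ Finset.range i, (-1 : ℤ) ^ j *
        (((s : ℤ) - i + j + 1) * ((n : ℤ) - 2 * r + s + j - i + 1) -
          ((r : ℤ) - s - j) ^ 2) * johnsonC n r s (i - 1) j :=
  stmt16_general n r s i hrn hi1 hirs
end
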